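/- arXiv:1603.04107 — 4 statements merged into one kernel-verified Lean document; each statement's English description precedes it below -/
import Mathlib

section
/- Let a, b < 1 be real numbers and let (W_n), (X_n) be real sequences with X_0 = W_0 = 0 satisfying X_n = W_n + a·M_n + b·m_n for all n ≥ 0, where M_n = max_{k≤n} X_k and m_n = min_{k≤n} X_k. Then M_n = (1/(1−a)) · max_{k≤n} (W_k + (b/(1−b)) g_k), where g_k = min_{l≤k} (W_l + a·M_l). -/
open Finset

/-- Running maximum `max_{k ≤ n} x_k`. -/
noncomputable def runMax (x : ℕ → ℝ) (n : ℕ) : ℝ :=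
  (range (n + 1)).sup' nonempty_range_add_one x

/-- Running minimum `min_{k ≤ n} x_k`. -/
noncomputable def runMin (x : ℕ → ℝ) (n : ℕ) : ℝ :=
  (range (n + 1)).inf' nonempty_range_add_one x

/-!
Substituting the defining relation, `W_l + a M_l = X_l - b m_l`. For `c ≤ 1` the running minimum
of `x_l - c · min_{j ≤ l} x_j` is `(1 - c) · min_{j ≤ n} x_j`: each term is at least
`(1 - c) m_l ≥ (1 - c) m_n`, with equality at a minimiser of `x`. Hence `g_k = (1 - b) m_k`, so
`W_k + (b/(1-b)) g_k = X_k - a M_k`, and the dual fact for running maxima gives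
`max_{k ≤ n} (X_k - a M_k) = (1 - a) M_n`.
-/

section RunningExtrema

variable (x : ℕ → ℝ) {k n : ℕ}

lemma le_runMax (h : k ≤ n) : x k ≤ runMax x n :=
  le_sup' x (mem_range.2 (Nat.lt_succ_of_le h))

lemma runMin_le (h : k ≤ n) : runMin x n ≤ x k :=
  inf'_le x (mem_range.2 (Nat.lt_succ_of_le h))

lemma runMax_le {c : ℝ} (h : ∀ k ≤ n, x k ≤ c) : runMax x n ≤ c :=
  sup'_le _ _ fun k hk => h k (Nat.lt_succ_iff.1 (mem_range.1 hk))

lemma le_runMin {c : ℝ} (h : ∀ k ≤ n, c ≤ x k) : c ≤ runMin x n :=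
  le_inf' _ _ fun k hk => h k (Nat.lt_succ_iff.1 (mem_range.1 hk))

lemma runMax_mono (h : k ≤ n) : runMax x k ≤ runMax x n :=
  runMax_le x fun _ hj => le_runMax x (hj.trans h)

lemma runMin_anti (h : k ≤ n) : runMin x n ≤ runMin x k :=
  le_runMin x fun _ hj => runMin_le x (hj.trans h)

lemma exists_le_runMax_eq (n : ℕ) : ∃ k ≤ n, runMax x n = x k := by
  obtain ⟨k, hk, h⟩ := exists_mem_eq_sup' (nonempty_range_add_one (n := n)) x
  exact ⟨k, Nat.lt_succ_iff.1 (mem_range.1 hk), h⟩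

lemma exists_le_runMin_eq (n : ℕ) : ∃ k ≤ n, runMin x n = x k := by
  obtain ⟨k, hk, h⟩ := exists_mem_eq_inf' (nonempty_range_add_one (n := n)) x
  exact ⟨k, Nat.lt_succ_iff.1 (mem_range.1 hk), h⟩

lemma runMax_sub_mul_runMax {c : ℝ} (hc : c ≤ 1) (n : ℕ) :
    runMax (fun l => x l - c * runMax x l) n = (1 - c) * runMax x n := by
  apply le_antisymm
  · refine runMax_le _ fun l hl => ?_
    have hxl := le_runMax x (le_refl l)
    have hMl := runMax_mono x hl
    nlinarith
  · obtain ⟨k, hk, hxk⟩ := exists_le_runMax_eq x n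
    have hMk : runMax x k = runMax x n := le_antisymm (runMax_mono x hk) (hxk ▸ le_runMax x le_rfl)
    calc (1 - c) * runMax x n = x k - c * runMax x k := by rw [hMk, ← hxk]; ring
      _ ≤ _ := le_runMax (fun l => x l - c * runMax x l) hk

lemma runMin_sub_mul_runMin {c : ℝ} (hc : c ≤ 1) (n : ℕ) :
    runMin (fun l => x l - c * runMin x l) n = (1 - c) * runMin x n := by
  apply le_antisymm
  · obtain ⟨k, hk, hxk⟩ := exists_le_runMin_eq x n
    have hmk : runMin x k = runMin x n := le_antisymm (hxk ▸ runMin_le x le_rfl) (runMin_anti x hk)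
    calc _ ≤ x k - c * runMin x k := runMin_le (fun l => x l - c * runMin x l) hk
      _ = (1 - c) * runMin x n := by rw [hmk, ← hxk]; ring
  · refine le_runMin _ fun l hl => ?_
    have hxl := runMin_le x (le_refl l)
    have hml := runMin_anti x hl
    nlinarith

end RunningExtrema

theorem runMax_eq_of_perturbed_general (a b : ℝ) (ha : a < 1) (hb : b < 1) (W X : ℕ → ℝ)
    (hXn : ∀ n, X n = W n + a * runMax X n + b * runMin X n) (n : ℕ) :
    runMax X n = (1 / (1 - a)) *
      runMax (fun k => W k + (b / (1 - b)) *
        runMin (fun l => W l + a * runMax X l) k) n := by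
  have hg : (fun l => W l + a * runMax X l) = fun l => X l - b * runMin X l := by
    funext l; linarith [hXn l]
  have hF : (fun k => W k + (b / (1 - b)) * runMin (fun l => W l + a * runMax X l) k) =
      fun k => X k - a * runMax X k := by
    funext k
    rw [hg, runMin_sub_mul_runMin X hb.le, ← mul_assoc, div_mul_cancel₀ b (sub_ne_zero.2 hb.ne')]
    linarith [hXn k]
  rw [hF, runMax_sub_mul_runMax X ha.le, ← mul_assoc, one_div_mul_cancel (sub_ne_zero.2 ha.ne'),
    one_mul]

/-- if `X_n = W_n + a M_n + b m_n` with `a, b < 1`, then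
`M_n = (1/(1−a)) · max_{k≤n} (W_k + (b/(1−b)) g_k)` where
`g_k = min_{l≤k}(W_l + a M_l)`. -/
theorem runMax_eq_of_perturbed (a b : ℝ) (ha : a < 1) (hb : b < 1) (W X : ℕ → ℝ)
    (hX0 : X 0 = 0) (hW0 : W 0 = 0)
    (hXn : ∀ n, X n = W n + a * runMax X n + b * runMin X n) (n : ℕ) :
    runMax X n = (1 / (1 - a)) *
      runMax (fun k => W k + (b / (1 - b)) *
        runMin (fun l => W l + a * runMax X l) k) n :=
  runMax_eq_of_perturbed_general a b ha hb W X hXn n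
end

section
/- Let (X_n) be a nearest-neighbor walk on ℤ with X_0 = 0, Δ_k = X_{k+1} − X_k ∈ {−1,+1}, and let M_n, m_n be the running maximum and minimum. Then for all n ≥ 1, X_{n−1} = m_{n−1} + M_{n−1} + Σ_{k=1}^{n−1} Δ_{k−1}·1{m_{k−1} ≤ X_k ≤ M_{k−1}}. -/
open Finset

/-- Running maximum `max_{k ≤ n} x_k` of an integer sequence. -/
def runMaxZ (x : ℕ → ℤ) (n : ℕ) : ℤ :=
  (range (n + 1)).sup' nonempty_range_add_one x

/-- Running minimum `min_{k ≤ n} x_k` of an integer sequence. -/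
def runMinZ (x : ℕ → ℤ) (n : ℕ) : ℤ :=
  (range (n + 1)).inf' nonempty_range_add_one x

/-!
For a walk with steps of size at most one, `m_n + M_n + Σ_{k ≤ n} Δ_{k-1} 1{m_{k-1} ≤ x_k ≤ M_{k-1}}`
moves exactly as `x_n` does. A step that stays in the old range `[m, M]` leaves both extremes fixed
and is counted by the sum; a step leaving it has size one, so it starts at the extreme it passes
and moves that extreme, and hence `m + M`, by exactly the step. At time `0` both sides equal `2 x_0`.
-/

lemma runMaxZ_zero (x : ℕ → ℤ) : runMaxZ x 0 = x 0 := by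
  simp [runMaxZ]

lemma runMinZ_zero (x : ℕ → ℤ) : runMinZ x 0 = x 0 := by
  simp [runMinZ]

lemma runMaxZ_succ (x : ℕ → ℤ) (m : ℕ) :
    runMaxZ x (m + 1) = max (x (m + 1)) (runMaxZ x m) := by
  simp [runMaxZ, range_add_one (n := m + 1), sup'_insert]

lemma runMinZ_succ (x : ℕ → ℤ) (m : ℕ) :
    runMinZ x (m + 1) = min (x (m + 1)) (runMinZ x m) := by
  simp [runMinZ, range_add_one (n := m + 1), inf'_insert]

lemma le_runMaxZ (x : ℕ → ℤ) (m : ℕ) : x m ≤ runMaxZ x m :=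
  le_sup' x (self_mem_range_succ m)

lemma runMinZ_le (x : ℕ → ℤ) (m : ℕ) : runMinZ x m ≤ x m :=
  inf'_le x (self_mem_range_succ m)

lemma runMinZ_add_runMaxZ_succ (x : ℕ → ℤ) (m : ℕ) (hstep : |x (m + 1) - x m| ≤ 1) :
    runMinZ x (m + 1) + runMaxZ x (m + 1) +
        (x (m + 1) - x m) * (if runMinZ x m ≤ x (m + 1) ∧ x (m + 1) ≤ runMaxZ x m then 1 else 0) =
      runMinZ x m + runMaxZ x m + (x (m + 1) - x m) := by
  have hmax := le_runMaxZ x m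
  have hmin := runMinZ_le x m
  rw [abs_le] at hstep
  rw [runMinZ_succ, runMaxZ_succ]
  split_ifs with h
  · rw [min_eq_right h.1, max_eq_right h.2]
    ring
  · rcases not_and_or.mp h with h | h <;> rw [not_le] at h
    · rw [min_eq_left h.le, max_eq_right (by omega)]
      omega
    · rw [min_eq_right (by omega), max_eq_left h.le]
      omega

lemma add_eq_runMinZ_add_runMaxZ_add_sum (x : ℕ → ℤ)
    (hstep : ∀ k, |x (k + 1) - x k| ≤ 1) (m : ℕ) :
    x m + x 0 = runMinZ x m + runMaxZ x m +
      ∑ k ∈ Icc 1 m, (x k - x (k - 1)) *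
        (if runMinZ x (k - 1) ≤ x k ∧ x k ≤ runMaxZ x (k - 1) then 1 else 0) := by
  induction m with
  | zero => simp [runMinZ_zero, runMaxZ_zero]
  | succ m ih =>
    rw [sum_Icc_succ_top (by omega), Nat.add_sub_cancel, ← add_assoc, add_right_comm,
      runMinZ_add_runMaxZ_succ x m (hstep m)]
    linarith

theorem walk_eq_min_add_max_add_sum_general (X : ℕ → ℤ) (hX0 : X 0 = 0)
    (hnn : ∀ k, X (k + 1) - X k = 1 ∨ X (k + 1) - X k = -1) (n : ℕ) :
    X (n - 1) = runMinZ X (n - 1) + runMaxZ X (n - 1) +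
      ∑ k ∈ Icc 1 (n - 1), (X k - X (k - 1)) *
        (if runMinZ X (k - 1) ≤ X k ∧ X k ≤ runMaxZ X (k - 1) then 1 else 0) := by
  have hstep (k : ℕ) : |X (k + 1) - X k| ≤ 1 := by
    rcases hnn k with h | h <;> simp [h]
  simpa [hX0] using add_eq_runMinZ_add_runMaxZ_add_sum X hstep (n - 1)

/-- for a nearest-neighbor walk on `ℤ` started at `0`,
`X_{n−1} = m_{n−1} + M_{n−1} + Σ_{k=1}^{n−1} Δ_{k−1}·1{m_{k−1} ≤ X_k ≤ M_{k−1}}`. -/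
theorem walk_eq_min_add_max_add_sum (X : ℕ → ℤ) (hX0 : X 0 = 0)
    (hnn : ∀ k, X (k + 1) - X k = 1 ∨ X (k + 1) - X k = -1) (n : ℕ) (hn : 1 ≤ n) :
    X (n - 1) = runMinZ X (n - 1) + runMaxZ X (n - 1) +
      ∑ k ∈ Icc 1 (n - 1), (X k - X (k - 1)) *
        (if runMinZ X (k - 1) ≤ X k ∧ X k ≤ runMaxZ X (k - 1) then 1 else 0) :=
  walk_eq_min_add_max_add_sum_general X hX0 hnn n
end

section
/- The native p-rotor walk (U_n) on ℤ (with initial rotors all pointing toward the origin) is a correlated random walk with persistence 1−p: conditional on the past, at each step n ≥ 1 the walk repeats its previous step with probability 1−p and reverses direction with probability p. -/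
/-!
Started from rotors that all point toward the origin, the walk keeps the invariant that every
rotor to its left points right and every rotor to its right points left. In particular the rotor
at the current position `U_{n+1}` points back to `U_n`, so the next step is
`U_{n+2} - U_{n+1} = -B_{n+1} (U_{n+1} - U_n)`: the walk repeats its previous step exactly when
the coin `B_{n+1}` is `-1`. Since `U_0, …, U_{n+1}` are functions of `R, B_0, …, B_n`, that coin
is independent of the past, and the conditional probability is `P(B_{n+1} = -1) = 1 - p`.
-/

open MeasureTheory ProbabilityTheory Finset

/-- One step of the p-rotor walk dynamics: given the current rotor configuration
and position `s = (ρ, x)` and the outcome `b ∈ {−1,+1}` of the coin (`b = 1`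
means the rotor is broken and fails to flip), the rotor at `x` becomes
`b · ρ(x)` and the walker moves one step in the direction of the new rotor. -/
def rotorStep (s : (ℤ → ℤ) × ℤ) (b : ℤ) : (ℤ → ℤ) × ℤ :=
  let ρ' := Function.update s.1 s.2 (b * s.1 s.2)
  (ρ', s.2 + ρ' s.2)

/-- The state (rotor configuration, position) of the p-rotor walk after `n`
steps, started at `0` with initial rotors `ρ0` and coin outcomes `b`. -/
def rotorState (ρ0 : ℤ → ℤ) (b : ℕ → ℤ) : ℕ → (ℤ → ℤ) × ℤ
  | 0 => (ρ0, 0)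
  | n + 1 => rotorStep (rotorState ρ0 b n) (b n)

/-- The position of the p-rotor walk after `n` steps. -/
def rotorWalk (ρ0 : ℤ → ℤ) (b : ℕ → ℤ) (n : ℕ) : ℤ := (rotorState ρ0 b n).2

structure RotorsPointToward (ρ : ℤ → ℤ) (x : ℤ) : Prop where
  right : ∀ y, x < y → ρ y = -1
  left : ∀ y, y < x → ρ y = 1
  here : ρ x = 1 ∨ ρ x = -1

def nativeRotors (r : ℤ) : ℤ → ℤ := fun x => if 0 < x then -1 else if x < 0 then 1 else r

lemma rotorsPointToward_nativeRotors {r : ℤ} (hr : r = 1 ∨ r = -1) :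
    RotorsPointToward (nativeRotors r) 0 := by
  refine ⟨fun y hy => if_pos hy, fun y hy => ?_, hr⟩
  simp only [nativeRotors, hy, if_true, if_neg hy.not_gt]

lemma rotorStep_snd (s : (ℤ → ℤ) × ℤ) (b : ℤ) : (rotorStep s b).2 = s.2 + b * s.1 s.2 := by
  simp [rotorStep]

namespace RotorsPointToward

variable {s : (ℤ → ℤ) × ℤ} {b : ℤ}

lemma mul_eq_one_or_neg_one (h : RotorsPointToward s.1 s.2) (hb : b = 1 ∨ b = -1) :
    b * s.1 s.2 = 1 ∨ b * s.1 s.2 = -1 := by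
  rcases hb with rfl | rfl <;> rcases h.here with h' | h' <;> simp [h']

lemma rotorStep_fst_apply_snd (h : RotorsPointToward s.1 s.2) (hb : b = 1 ∨ b = -1) :
    (rotorStep s b).1 (rotorStep s b).2 = s.2 - (rotorStep s b).2 := by
  rw [rotorStep_snd]
  have hne : s.2 + b * s.1 s.2 ≠ s.2 := by
    rcases h.mul_eq_one_or_neg_one hb with h' | h' <;> omega
  simp only [rotorStep, Function.update_self, Function.update_of_ne hne]
  rcases h.mul_eq_one_or_neg_one hb with h' | h' <;> rw [h']
  · rw [h.right _ (by omega)]; ring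
  · rw [h.left _ (by omega)]; ring

lemma step (h : RotorsPointToward s.1 s.2) (hb : b = 1 ∨ b = -1) :
    RotorsPointToward (rotorStep s b).1 (rotorStep s b).2 := by
  have hback := h.rotorStep_fst_apply_snd hb
  have hold : (rotorStep s b).1 s.2 = b * s.1 s.2 := Function.update_self _ _ _
  have hfst : ∀ y ≠ s.2, (rotorStep s b).1 y = s.1 y :=
    fun y hy => Function.update_of_ne hy _ _
  have hd := h.mul_eq_one_or_neg_one hb
  rw [rotorStep_snd] at hback ⊢
  set d := b * s.1 s.2
  refine ⟨fun y hy => ?_, fun y hy => ?_, by rw [hback]; omega⟩ <;>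
    rcases eq_or_ne y s.2 with rfl | hy
  · rw [hold]; omega
  · rw [hfst y hy]; exact h.right y (by omega)
  · rw [hold]; omega
  · rw [hfst y hy]; exact h.left y (by omega)

end RotorsPointToward

lemma rotorWalk_succ (ρ0 : ℤ → ℤ) (b : ℕ → ℤ) (n : ℕ) :
    rotorWalk ρ0 b (n + 1) = rotorWalk ρ0 b n + b n * (rotorState ρ0 b n).1 (rotorWalk ρ0 b n) :=
  rotorStep_snd _ _

section Walk

variable {ρ0 : ℤ → ℤ} {b : ℕ → ℤ}

lemma rotorsPointToward_rotorState (hρ0 : RotorsPointToward ρ0 0)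
    (hb : ∀ k, b k = 1 ∨ b k = -1) (n : ℕ) :
    RotorsPointToward (rotorState ρ0 b n).1 (rotorWalk ρ0 b n) := by
  induction n with
  | zero => exact hρ0
  | succ n ih => exact ih.step (hb n)

lemma rotorWalk_succ_sub (hρ0 : RotorsPointToward ρ0 0) (hb : ∀ k, b k = 1 ∨ b k = -1)
    (n : ℕ) :
    rotorWalk ρ0 b (n + 1) - rotorWalk ρ0 b n = 1 ∨
      rotorWalk ρ0 b (n + 1) - rotorWalk ρ0 b n = -1 := by
  rw [rotorWalk_succ, add_sub_cancel_left]
  exact (rotorsPointToward_rotorState hρ0 hb n).mul_eq_one_or_neg_one (hb n)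

lemma rotorWalk_add_two (hρ0 : RotorsPointToward ρ0 0) (hb : ∀ k, b k = 1 ∨ b k = -1)
    (n : ℕ) :
    rotorWalk ρ0 b (n + 2) =
      rotorWalk ρ0 b (n + 1) + b (n + 1) * (rotorWalk ρ0 b n - rotorWalk ρ0 b (n + 1)) := by
  rw [rotorWalk_succ ρ0 b (n + 1)]
  congr 2
  exact (rotorsPointToward_rotorState hρ0 hb n).rotorStep_fst_apply_snd (hb n)

lemma rotorWalk_step_repeats_iff (hρ0 : RotorsPointToward ρ0 0)
    (hb : ∀ k, b k = 1 ∨ b k = -1) (n : ℕ) :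
    rotorWalk ρ0 b (n + 2) - rotorWalk ρ0 b (n + 1) =
        rotorWalk ρ0 b (n + 1) - rotorWalk ρ0 b n ↔ b (n + 1) = -1 := by
  rw [rotorWalk_add_two hρ0 hb]
  rcases hb (n + 1) with h | h <;> rw [h] <;>
    rcases rotorWalk_succ_sub hρ0 hb n with h' | h' <;> omega

end Walk

lemma rotorState_congr (ρ0 : ℤ → ℤ) {b b' : ℕ → ℤ} {n : ℕ} (h : ∀ k < n, b k = b' k) :
    rotorState ρ0 b n = rotorState ρ0 b' n := by
  induction n with
  | zero => rfl
  | succ n ih =>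
    simp only [rotorState, ih fun k hk => h k (by omega), h n (by omega)]

lemma measurable_rotorWalk {Ω : Type*} {m : MeasurableSpace Ω} (ρ : ℤ → ℤ → ℤ) {R : Ω → ℤ}
    {B : ℕ → Ω → ℤ} {n : ℕ} (hR : Measurable R) (hB : ∀ k < n, Measurable (B k)) :
    Measurable fun ω => rotorWalk (ρ (R ω)) (fun k => B k ω) n := by
  let g : ℤ × (Fin n → ℤ) → ℤ := fun q =>
    rotorWalk (ρ q.1) (fun k => if hk : k < n then q.2 ⟨k, hk⟩ else 0) n
  have hg : (fun ω => rotorWalk (ρ (R ω)) (fun k => B k ω) n) =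
      g ∘ fun ω => (R ω, fun k : Fin n => B k ω) := by
    funext ω
    exact congrArg Prod.snd (rotorState_congr _ fun k hk => by simp [hk])
  rw [hg]
  exact (measurable_of_countable g).comp
    (hR.prodMk (measurable_pi_lambda _ fun k => hB k k.2))

lemma iSup_comap_rotorWalk_le {Ω : Type*} {m : MeasurableSpace Ω} (ρ : ℤ → ℤ → ℤ)
    {R : Ω → ℤ} {B : ℕ → Ω → ℤ} {n : ℕ} (hR : Measurable R) (hB : ∀ k < n, Measurable (B k)) :
    ⨆ k ∈ range (n + 1),
      MeasurableSpace.comap (fun ω => rotorWalk (ρ (R ω)) (fun j => B j ω) k) ⊤ ≤ m :=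
  iSup₂_le fun k hk =>
    (measurable_rotorWalk ρ hR fun j hj => hB j (by rw [mem_range] at hk; omega)).comap_le

section Probability

variable {Ω : Type*} {m0 : MeasurableSpace Ω} {μ : Measure Ω}

lemma ProbabilityTheory.iIndepFun.indep_comap_iSup {ι : Type*} {β : ι → Type*}
    [mβ : ∀ i, MeasurableSpace (β i)] {X : ∀ i, Ω → β i} (hX : iIndepFun X μ)
    (hmeas : ∀ i, Measurable (X i)) {j : ι} {S : Set ι} (hj : j ∉ S) :
    Indep ((mβ j).comap (X j)) (⨆ i ∈ S, (mβ i).comap (X i)) μ := by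
  have h := indep_iSup_of_disjoint (fun i => (hmeas i).comap_le) hX.iIndep
    (Set.disjoint_singleton_left.mpr hj)
  rwa [_root_.iSup_singleton] at h

lemma condExp_indicator_preimage_of_indep [IsProbabilityMeasure μ] {β : Type*}
    [mβ : MeasurableSpace β] {X : Ω → β} (hX : Measurable X) {m : MeasurableSpace Ω}
    (hm : m ≤ m0) (hind : Indep (mβ.comap X) m μ) {s : Set β} (hs : MeasurableSet s) :
    μ[(X ⁻¹' s).indicator 1 | m] =ᵐ[μ] fun _ => μ.real (X ⁻¹' s) := by
  have hf : StronglyMeasurable[mβ.comap X] ((X ⁻¹' s).indicator (1 : Ω → ℝ)) :=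
    stronglyMeasurable_const.indicator ⟨s, hs, rfl⟩
  have h := condExp_indep_eq hX.comap_le hm hf hind
  rwa [integral_indicator_one (hX hs)] at h

lemma measureReal_eq_neg_one [IsProbabilityMeasure μ] {X : Ω → ℤ} (hX : Measurable X)
    (hval : ∀ ω, X ω = 1 ∨ X ω = -1) {p : ℝ} (hp : 0 ≤ p)
    (hlaw : μ {ω | X ω = 1} = ENNReal.ofReal p) :
    μ.real (X ⁻¹' {-1}) = 1 - p := by
  have hcompl : X ⁻¹' {-1} = (X ⁻¹' {1})ᶜ := by
    ext ω
    rcases hval ω with h | h <;> simp [h]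
  have hlaw' : μ (X ⁻¹' {1}) = ENNReal.ofReal p := hlaw
  rw [hcompl, probReal_compl_eq_one_sub (hX (measurableSet_singleton 1)), measureReal_def,
    hlaw', ENNReal.toReal_ofReal hp]

end Probability

theorem native_rotorWalk_correlated_general {Ω : Type*} [m0 : MeasurableSpace Ω] (μ : Measure Ω)
    [IsProbabilityMeasure μ] (p : ℝ) (hp : p ∈ Set.Ioo (0 : ℝ) 1)
    (B : ℕ → Ω → ℤ) (R : Ω → ℤ)
    (hBmeas : ∀ n, Measurable (B n)) (hRmeas : Measurable R)
    (hBval : ∀ n ω, B n ω = 1 ∨ B n ω = -1)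
    (hBlaw : ∀ n, μ {ω | B n ω = 1} = ENNReal.ofReal p)
    (hRval : ∀ ω, R ω = 1 ∨ R ω = -1)
    (hindep : iIndepFun
      (fun i : Option ℕ => i.elim R B) μ)
    -- the native p-rotor walk and its natural filtration
    (U : ℕ → Ω → ℤ)
    (hU : ∀ n ω, U n ω = rotorWalk
      (fun x => if 0 < x then -1 else if x < 0 then 1 else R ω) (fun k => B k ω) n)
    (F : ℕ → MeasurableSpace Ω)
    (hFdef : ∀ n, F n = ⨆ k ∈ range (n + 1), MeasurableSpace.comap (U k) ⊤) :
    ∀ n : ℕ, 1 ≤ n →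
      (μ[(fun ω => if U (n + 1) ω - U n ω = U n ω - U (n - 1) ω
          then (1 : ℝ) else 0) | F n])
        =ᵐ[μ] fun _ => 1 - p := by
  intro n hn
  obtain ⟨m, rfl⟩ := Nat.exists_eq_add_of_le' hn
  set X : Option ℕ → Ω → ℤ := fun i => i.elim R B
  have hX : ∀ i, Measurable (X i) := fun i => i.rec hRmeas hBmeas
  set T : Set (Option ℕ) := insert none (some '' Set.Iio (m + 1))
  set past := ⨆ i ∈ T, MeasurableSpace.comap (X i) ⊤
  have hpast : ∀ i ∈ T, Measurable[past] (X i) :=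
    fun i hi => measurable_iff_comap_le.2
      (le_iSup₂ (f := fun i (_ : i ∈ T) => MeasurableSpace.comap (X i) ⊤) i hi)
  have hF : F (m + 1) ≤ past := by
    rw [hFdef, show U = fun k ω => rotorWalk (nativeRotors (R ω)) (fun j => B j ω) k from
      funext₂ hU]
    exact iSup_comap_rotorWalk_le nativeRotors (hpast none (by simp [T]))
      fun j hj => hpast (some j) (by simp [T]; omega)
  have hindep_past : Indep (MeasurableSpace.comap (B (m + 1)) ⊤) (F (m + 1)) μ :=
    indep_of_indep_of_le_right (hindep.indep_comap_iSup hX (j := some (m + 1)) (by simp [T])) hF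
  have hevent : (fun ω => if U (m + 1 + 1) ω - U (m + 1) ω = U (m + 1) ω - U (m + 1 - 1) ω
      then (1 : ℝ) else 0) = (B (m + 1) ⁻¹' {-1}).indicator 1 := by
    funext ω
    simp only [Set.indicator, Set.mem_preimage, Set.mem_singleton_iff, Pi.one_apply, hU,
      Nat.add_sub_cancel]
    exact if_congr (rotorWalk_step_repeats_iff (rotorsPointToward_nativeRotors (hRval ω))
      (fun k => hBval k ω) m) rfl rfl
  rw [hevent]
  refine (condExp_indicator_preimage_of_indep (hBmeas (m + 1))
    (hF.trans (iSup₂_le fun i _ => (hX i).comap_le)) hindep_past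
    (measurableSet_singleton _)).trans ?_
  filter_upwards with ω
  rw [measureReal_eq_neg_one (hBmeas (m + 1)) (hBval (m + 1)) hp.1.le (hBlaw (m + 1))]

/-- the native p-rotor walk (all initial rotors pointing toward
the origin, the rotor at `0` uniform on `{−1,+1}`) is a correlated random walk
with persistence `1−p`: for every `n ≥ 1`, conditionally on the past
`F_n = σ(U_0,…,U_n)`, the walk repeats its previous step with probability
`1−p` (and reverses direction with probability `p`). -/
theorem native_rotorWalk_correlated {Ω : Type*} [m0 : MeasurableSpace Ω] (μ : Measure Ω)
    [IsProbabilityMeasure μ] (p : ℝ) (hp : p ∈ Set.Ioo (0 : ℝ) 1)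
    (B : ℕ → Ω → ℤ) (R : Ω → ℤ)
    (hBmeas : ∀ n, Measurable (B n)) (hRmeas : Measurable R)
    (hBval : ∀ n ω, B n ω = 1 ∨ B n ω = -1)
    (hBlaw : ∀ n, μ {ω | B n ω = 1} = ENNReal.ofReal p)
    (hRval : ∀ ω, R ω = 1 ∨ R ω = -1)
    (hRlaw : μ {ω | R ω = 1} = 1 / 2)
    (hindep : iIndepFun
      (fun i : Option ℕ => i.elim R B) μ)
    -- the native p-rotor walk and its natural filtration
    (U : ℕ → Ω → ℤ)
    (hU : ∀ n ω, U n ω = rotorWalk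
      (fun x => if 0 < x then -1 else if x < 0 then 1 else R ω) (fun k => B k ω) n)
    (F : ℕ → MeasurableSpace Ω)
    (hFdef : ∀ n, F n = ⨆ k ∈ range (n + 1), MeasurableSpace.comap (U k) ⊤) :
    ∀ n : ℕ, 1 ≤ n →
      (μ[(fun ω => if U (n + 1) ω - U n ω = U n ω - U (n - 1) ω
          then (1 : ℝ) else 0) | F n])
        =ᵐ[μ] fun _ => 1 - p :=
  native_rotorWalk_correlated_general (m0 := m0) μ p hp B R hBmeas hRmeas hBval hBlaw hRval hindep U
    hU F hFdef
end

section
/- Let a, b < 1 and suppose X is a continuous process with X(0)=0 satisfying X(t) = B(t) + a·sup_{s≤t}X(s) with b = 0, where B is a continuous function with B(0)=0. Then sup_{s≤t} X(s) = (1/(1−a))·sup_{s≤t} B(s) and hence X(t) = B(t) + (a/(1−a))·sup_{s≤t} B(s) for all t ≥ 0. -/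
/-!
Write `M t = sup_{[0,t]} X`. Since `X ≤ M` and `M` is nondecreasing, the equation gives
`B u = X u - a M u ≤ (1 - a) M u ≤ (1 - a) M t` on `[0,t]`, and at a point
`s ∈ [0,t]` where `X` attains its maximum over `[0,t]` we have `M s = X s = M t`, hence
`B s = (1 - a) M t`. So `(1 - a) M t` is the maximum of `B` over `[0,t]`, and dividing by `1 - a`
gives both identities.
-/

open Set

lemma sSup_image_Icc_mono {X : ℝ → ℝ} {s t : ℝ} (hX : BddAbove (X '' Icc 0 t))
    (hs : 0 ≤ s) (hst : s ≤ t) : sSup (X '' Icc 0 s) ≤ sSup (X '' Icc 0 t) :=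
  csSup_le_csSup hX ((nonempty_Icc.2 hs).image X) (image_mono (Icc_subset_Icc le_rfl hst))

lemma le_sSup_image_Icc_self {X : ℝ → ℝ} {t : ℝ} (hX : ContinuousOn X (Icc 0 t)) (ht : 0 ≤ t) :
    X t ≤ sSup (X '' Icc 0 t) :=
  le_csSup (isCompact_Icc.image_of_continuousOn hX).bddAbove ⟨t, ⟨ht, le_rfl⟩, rfl⟩

lemma exists_mem_Icc_eq_sSup_image_Icc {X : ℝ → ℝ} {t : ℝ} (hX : ContinuousOn X (Icc 0 t))
    (ht : 0 ≤ t) :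
    ∃ s ∈ Icc 0 t, X s = sSup (X '' Icc 0 t) ∧ sSup (X '' Icc 0 s) = sSup (X '' Icc 0 t) := by
  obtain ⟨s, hs, hXs⟩ := isCompact_Icc.exists_sSup_image_eq (nonempty_Icc.2 ht) hX
  have hbdd := (isCompact_Icc.image_of_continuousOn hX).bddAbove
  refine ⟨s, hs, hXs.symm, le_antisymm (sSup_image_Icc_mono hbdd hs.1 hs.2) ?_⟩
  rw [hXs]
  exact le_sSup_image_Icc_self (hX.mono (Icc_subset_Icc le_rfl hs.2)) hs.1

theorem isGreatest_image_Icc_of_eq_add_mul_sSup {a t : ℝ} {X B : ℝ → ℝ} (ha : a ≤ 1)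
    (ht : 0 ≤ t) (hX : ContinuousOn X (Icc 0 t))
    (heq : ∀ s ∈ Icc 0 t, X s = B s + a * sSup (X '' Icc 0 s)) :
    IsGreatest (B '' Icc 0 t) ((1 - a) * sSup (X '' Icc 0 t)) := by
  obtain ⟨s, hs, hXs, hMs⟩ := exists_mem_Icc_eq_sSup_image_Icc hX ht
  have hbdd := (isCompact_Icc.image_of_continuousOn hX).bddAbove
  refine ⟨⟨s, hs, ?_⟩, ?_⟩
  · have hBs := heq s hs
    rw [hMs, ← hXs] at hBs
    rw [← hXs]
    linarith
  · rintro _ ⟨u, hu, rfl⟩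
    have hXu := le_sSup_image_Icc_self (hX.mono (Icc_subset_Icc le_rfl hu.2)) hu.1
    have hMu : sSup (X '' Icc 0 u) ≤ sSup (X '' Icc 0 t) := sSup_image_Icc_mono hbdd hu.1 hu.2
    linarith [heq u hu, mul_le_mul_of_nonneg_left hMu (sub_nonneg.2 ha)]

theorem one_sided_perturbed_explicit_general (a b : ℝ) (ha : a < 1) (hb0 : b = 0)
    (X B : ℝ → ℝ) (hXc : Continuous X)
    (heq : ∀ t ≥ 0, X t = B t + a * sSup (X '' Set.Icc 0 t) + b * sInf (X '' Set.Icc 0 t)) :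
    ∀ t ≥ 0,
      sSup (X '' Set.Icc 0 t) = (1 / (1 - a)) * sSup (B '' Set.Icc 0 t) ∧
      X t = B t + (a / (1 - a)) * sSup (B '' Set.Icc 0 t) := by
  subst hb0
  intro t ht
  have hB : sSup (B '' Icc 0 t) = (1 - a) * sSup (X '' Icc 0 t) :=
    (isGreatest_image_Icc_of_eq_add_mul_sSup ha.le ht hXc.continuousOn
      fun s hs => by simpa using heq s hs.1).csSup_eq
  have h1a : 1 - a ≠ 0 := by linarith
  have hMX : sSup (X '' Icc 0 t) = (1 / (1 - a)) * sSup (B '' Icc 0 t) := by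
    rw [hB]; field_simp
  refine ⟨hMX, ?_⟩
  rw [heq t ht, hMX]
  ring

/-- if a continuous `X` with `X(0)=0` solves
`X(t) = B(t) + a·sup_{s≤t} X(s)` (the case `b = 0`) for a continuous `B` with
`B(0)=0` and `a < 1`, then `sup_{s≤t} X(s) = (1/(1−a))·sup_{s≤t} B(s)` and
`X(t) = B(t) + (a/(1−a))·sup_{s≤t} B(s)` for all `t ≥ 0`. -/
theorem one_sided_perturbed_explicit (a b : ℝ) (ha : a < 1) (hb : b < 1) (hb0 : b = 0)
    (X B : ℝ → ℝ) (hXc : Continuous X) (hBc : Continuous B)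
    (hX0 : X 0 = 0) (hB0 : B 0 = 0)
    (heq : ∀ t ≥ 0, X t = B t + a * sSup (X '' Set.Icc 0 t) + b * sInf (X '' Set.Icc 0 t)) :
    ∀ t ≥ 0,
      sSup (X '' Set.Icc 0 t) = (1 / (1 - a)) * sSup (B '' Set.Icc 0 t) ∧
      X t = B t + (a / (1 - a)) * sSup (B '' Set.Icc 0 t) :=
  one_sided_perturbed_explicit_general a b ha hb0 X B hXc heq
end
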